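/- arXiv:1802.08735 — 2 statements merged into one kernel-verified Lean document; each statement's English description precedes it below -/
import Mathlib

section
/- In the binary setting with disjoint source–target supports and infinite-capacity embedding functions, there exists a feature-matching classifier whose target generalization error satisfies ε_t(h) ≥ 1 − ε_t(Ω*_t): concretely, if P_s(Ω*_s) = P_t(Ω*_t) = 1/2 where Ω*_s, Ω*_t are the optimal source and target decision regions, then the classifier given by the indicator of (X_s ∩ Ω*_s) ∪ (X_t ∩ (X \ Ω*_t)) achieves source error equal to the optimal source error ε_s(Ω*_s) while its target error equals 1 − ε_t(Ω*_t). -/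
open MeasureTheory Set

/-- Generalization error of the indicator classifier `1_Ω`. -/
noncomputable def eps {X : Type*} [MeasurableSpace X]
    (p : Measure (X × Bool)) (Ω : Set X) : ℝ :=
  ∫ z, |(if z.2 then (1 : ℝ) else 0) - Ω.indicator (1 : X → ℝ) z.1| ∂p

/-!
Since the supports are disjoint, the classifier agrees with `Ω*_s` almost surely on the source
and with `(Ω*_t)ᶜ` almost surely on the target, so on each domain it inherits the mass and the
error of that region. Flipping a classifier turns its misclassification event into the
complementary event, whence `ε_t((Ω*_t)ᶜ) = 1 - ε_t(Ω*_t)` and `P_t((Ω*_t)ᶜ) = 1/2`.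
-/

section AeEq

variable {α : Type*} [MeasurableSpace α] {μ : Measure α} {A B S T : Set α}

theorem union_inter_ae_eq_left (hA : ∀ᵐ x ∂μ, x ∈ A) (hAB : Disjoint A B) :
    ((A ∩ S) ∪ (B ∩ T) : Set α) =ᵐ[μ] S := by
  filter_upwards [hA] with x hxA
  have hxB : x ∉ B := hAB.notMem_of_mem_left hxA
  change (x ∈ (A ∩ S) ∪ (B ∩ T)) = (x ∈ S)
  simp [hxA, hxB]

theorem union_inter_ae_eq_right (hB : ∀ᵐ x ∂μ, x ∈ B) (hAB : Disjoint A B) :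
    ((A ∩ S) ∪ (B ∩ T) : Set α) =ᵐ[μ] T := by
  rw [union_comm]
  exact union_inter_ae_eq_left hB hAB.symm

end AeEq

section Error

variable {X : Type*} [MeasurableSpace X] {p : Measure (X × Bool)} {Ω Ω' : Set X}

def misclassified (Ω : Set X) : Set (X × Bool) :=
  Ω ×ˢ {false} ∪ Ωᶜ ×ˢ {true}

theorem measurableSet_misclassified (hΩ : MeasurableSet Ω) :
    MeasurableSet (misclassified Ω) :=
  (hΩ.prod (measurableSet_singleton _)).union (hΩ.compl.prod (measurableSet_singleton _))

omit [MeasurableSpace X] in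
theorem misclassified_compl (Ω : Set X) : misclassified Ωᶜ = (misclassified Ω)ᶜ := by
  ext ⟨x, b⟩
  cases b <;> simp [misclassified]

theorem eps_eq_measureReal_misclassified (hΩ : MeasurableSet Ω) :
    eps p Ω = p.real (misclassified Ω) := by
  rw [← integral_indicator_one (measurableSet_misclassified hΩ), eps]
  congr 1 with ⟨x, b⟩
  by_cases hx : x ∈ Ω <;> cases b <;> simp [misclassified, hx]

theorem eps_compl [IsProbabilityMeasure p] (hΩ : MeasurableSet Ω) :
    eps p Ωᶜ = 1 - eps p Ω := by
  rw [eps_eq_measureReal_misclassified hΩ.compl, eps_eq_measureReal_misclassified hΩ,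
    misclassified_compl, probReal_compl_eq_one_sub (measurableSet_misclassified hΩ)]

theorem eps_congr_ae (h : Ω =ᵐ[p.map Prod.fst] Ω') : eps p Ω = eps p Ω' := by
  refine integral_congr_ae ?_
  filter_upwards [ae_of_ae_map measurable_fst.aemeasurable
    (indicator_ae_eq_of_ae_eq_set (f := (1 : X → ℝ)) h)] with z hz
  rw [hz]

end Error

theorem feature_matching_bad_target_general {X : Type*} [MeasurableSpace X]
    (ps pt : Measure (X × Bool)) [IsProbabilityMeasure ps] [IsProbabilityMeasure pt]
    (Xs Xt : Set X) (hXs : MeasurableSet Xs) (hXt : MeasurableSet Xt)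
    (hdisj : Disjoint Xs Xt)
    (hPsXs : ps.map Prod.fst Xs = 1) (hPtXt : pt.map Prod.fst Xt = 1)
    (Ωs Ωt : Set X) (hΩt : MeasurableSet Ωt)
    (hms : ps.map Prod.fst Ωs = 1/2) (hmt : pt.map Prod.fst Ωt = 1/2) :
    ps.map Prod.fst ((Xs ∩ Ωs) ∪ (Xt ∩ Ωtᶜ)) = 1/2 ∧
    pt.map Prod.fst ((Xs ∩ Ωs) ∪ (Xt ∩ Ωtᶜ)) = 1/2 ∧
    eps ps ((Xs ∩ Ωs) ∪ (Xt ∩ Ωtᶜ)) = eps ps Ωs ∧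
    eps pt ((Xs ∩ Ωs) ∪ (Xt ∩ Ωtᶜ)) = 1 - eps pt Ωt := by
  have := Measure.isProbabilityMeasure_map (μ := ps) measurable_fst.aemeasurable
  have := Measure.isProbabilityMeasure_map (μ := pt) measurable_fst.aemeasurable
  have hsource : ((Xs ∩ Ωs) ∪ (Xt ∩ Ωtᶜ) : Set X) =ᵐ[ps.map Prod.fst] Ωs :=
    union_inter_ae_eq_left ((mem_ae_iff_prob_eq_one hXs).2 hPsXs) hdisj
  have htarget : ((Xs ∩ Ωs) ∪ (Xt ∩ Ωtᶜ) : Set X) =ᵐ[pt.map Prod.fst] Ωtᶜ :=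
    union_inter_ae_eq_right ((mem_ae_iff_prob_eq_one hXt).2 hPtXt) hdisj
  have hmt_compl : pt.map Prod.fst Ωtᶜ = 1/2 := by
    rw [prob_compl_eq_one_sub hΩt, hmt, one_div, ENNReal.one_sub_inv_two]
  exact ⟨(measure_congr hsource).trans hms, (measure_congr htarget).trans hmt_compl,
    eps_congr_ae hsource, (eps_congr_ae htarget).trans (eps_compl hΩt)⟩

/-- With disjoint source/target supports and `P_s(Ω*_s) = P_t(Ω*_t) = 1/2`, the classifier
given by the indicator of `(X_s ∩ Ω*_s) ∪ (X_t ∩ (Ω*_t)ᶜ)` matches feature mass across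
domains, achieves the optimal source error, but has target error `1 − ε_t(Ω*_t)`. -/
theorem feature_matching_bad_target {X : Type*} [MeasurableSpace X]
    (ps pt : Measure (X × Bool)) [IsProbabilityMeasure ps] [IsProbabilityMeasure pt]
    (Xs Xt : Set X) (hXs : MeasurableSet Xs) (hXt : MeasurableSet Xt)
    (hdisj : Disjoint Xs Xt)
    (hPsXs : ps.map Prod.fst Xs = 1) (hPtXt : pt.map Prod.fst Xt = 1)
    (Ωs Ωt : Set X) (hΩs : MeasurableSet Ωs) (hΩt : MeasurableSet Ωt)
    (hΩs_opt : ∀ Ω : Set X, MeasurableSet Ω → eps ps Ωs ≤ eps ps Ω)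
    (hΩt_opt : ∀ Ω : Set X, MeasurableSet Ω → eps pt Ωt ≤ eps pt Ω)
    (hms : ps.map Prod.fst Ωs = 1/2) (hmt : pt.map Prod.fst Ωt = 1/2) :
    ps.map Prod.fst ((Xs ∩ Ωs) ∪ (Xt ∩ Ωtᶜ)) = 1/2 ∧
    pt.map Prod.fst ((Xs ∩ Ωs) ∪ (Xt ∩ Ωtᶜ)) = 1/2 ∧
    eps ps ((Xs ∩ Ωs) ∪ (Xt ∩ Ωtᶜ)) = eps ps Ωs ∧
    eps pt ((Xs ∩ Ωs) ∪ (Xt ∩ Ωtᶜ)) = 1 - eps pt Ωt :=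
  feature_matching_bad_target_general ps pt Xs Xt hXs hXt hdisj hPsXs hPtXt Ωs Ωt hΩt hms hmt
end

section
/- The Ben-David adaptation bound for indicator classifiers: for probability distributions p_s, p_t on X × {0,1} and any measurable classifiers h, h* : X → {0,1}, the target error satisfies ε_t(h) ≤ ε_s(h) + ε_t(h*) + ε_s(h*) + |P_s(h ≠ h*) − P_t(h ≠ h*)|, where ε_p(h) = E_{(x,y)∼p}|y − h(x)| and P_s, P_t are the X-marginals. -/
/-! The error of a classifier is the probability of the set where it mislabels. A point where `h`
mislabels is one where `h*` mislabels or where `h` and `h*` disagree; a point where `h` and `h*`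
disagree is one where one of them mislabels. Hence `ε_t(h) ≤ ε_t(h*) + P_t(h ≠ h*)` and
`P_s(h ≠ h*) ≤ ε_s(h) + ε_s(h*)`, and the gap `P_t(h ≠ h*) - P_s(h ≠ h*)` is bounded by the
absolute difference. -/

open MeasureTheory Set

/-- Generalization error of a binary classifier `h` under a joint distribution `p`. -/
noncomputable def err {X : Type*} [MeasurableSpace X]
    (p : Measure (X × Bool)) (h : X → Bool) : ℝ :=
  ∫ z, |(if z.2 then (1 : ℝ) else 0) - (if h z.1 then (1 : ℝ) else 0)| ∂p

section Classifier

variable {X : Type*} [MeasurableSpace X] (p : Measure (X × Bool))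

lemma err_eq_measureReal {h : X → Bool} (hm : Measurable h) :
    err p h = p.real {z | z.2 ≠ h z.1} := by
  have hs : MeasurableSet {z : X × Bool | z.2 ≠ h z.1} :=
    (measurableSet_eq_fun measurable_snd (hm.comp measurable_fst)).compl
  rw [err, ← integral_indicator_one hs]
  congr 1 with ⟨x, y⟩
  cases y <;> cases hx : h x <;> simp [indicator, hx]

lemma marginal_measureReal_disagreement {h h' : X → Bool} (hm : Measurable h)
    (hm' : Measurable h') :
    (p.map Prod.fst).real {x | h x ≠ h' x} = p.real {z | h z.1 ≠ h' z.1} :=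
  map_measureReal_apply measurable_fst (measurableSet_eq_fun hm hm').compl

variable [IsFiniteMeasure p]

lemma err_le_err_add_disagreement {h h' : X → Bool} (hm : Measurable h) (hm' : Measurable h') :
    err p h ≤ err p h' + (p.map Prod.fst).real {x | h x ≠ h' x} := by
  rw [err_eq_measureReal p hm, err_eq_measureReal p hm',
    marginal_measureReal_disagreement p hm hm']
  refine (measureReal_mono fun z hz => ?_).trans (measureReal_union_le _ _)
  by_cases hz' : z.2 = h' z.1
  · exact Or.inr fun hh' => hz (hz'.trans hh'.symm)
  · exact Or.inl hz'

lemma disagreement_le_err_add_err {h h' : X → Bool} (hm : Measurable h) (hm' : Measurable h') :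
    (p.map Prod.fst).real {x | h x ≠ h' x} ≤ err p h + err p h' := by
  rw [err_eq_measureReal p hm, err_eq_measureReal p hm',
    marginal_measureReal_disagreement p hm hm']
  refine (measureReal_mono fun z hz => ?_).trans (measureReal_union_le _ _)
  by_cases hzh : z.2 = h z.1
  · exact Or.inr fun hzh' => hz (hzh.symm.trans hzh')
  · exact Or.inl hzh

end Classifier

/-- Ben-David style adaptation bound for binary classifiers:
`ε_t(h) ≤ ε_s(h) + ε_t(h*) + ε_s(h*) + |P_s(h ≠ h*) − P_t(h ≠ h*)|`. -/
theorem adaptation_bound {X : Type*} [MeasurableSpace X]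
    (ps pt : Measure (X × Bool)) [IsProbabilityMeasure ps] [IsProbabilityMeasure pt]
    (h hstar : X → Bool) (hm : Measurable h) (hm' : Measurable hstar) :
    err pt h ≤ err ps h + err pt hstar + err ps hstar +
      |(ps.map Prod.fst {x | h x ≠ hstar x}).toReal -
       (pt.map Prod.fst {x | h x ≠ hstar x}).toReal| := by
  have htarget := err_le_err_add_disagreement pt hm hm'
  have hsource := disagreement_le_err_add_err ps hm hm'
  have hgap := neg_abs_le ((ps.map Prod.fst).real {x | h x ≠ hstar x} -
    (pt.map Prod.fst).real {x | h x ≠ hstar x})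
  simp only [Measure.real] at htarget hsource hgap
  linarith
end
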